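/- (Lemma 4.2, case N < K) Let S ≥ 2 and integers 2 ≤ N < K be given, let q = Σ_{k=1}^{N} Σ_{s=1}^{S} C(N,k)·ψ_s(S,k), let M = (N·S^{N−1} − q)/(K·S^{N−1}), and let R = (N/K)·( q/S^{N−1} + K − N ). Then for every t ∈ {1,…,K}, with R_t = min( N·(1 − t/K), ((K−t)/(t+1))·Σ_{i=0}^{N−1} S^{−i} ), one has N − (K/(tN))·(N − R_t)·M > R; that is, the memory–rate point (M,R) of the proposed scheme lies strictly below the line through (0,N) and (tN/K, R_t). -/

import Mathlib

/-- Pair `(g S k, f S k)` defined by the recurrence: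
`g(S,1)=1, f(S,1)=0`, and for `k ≥ 2`,
`g(S,k)=(S−1)·f(S,k−1)`, `f(S,k)=(S−2)·f(S,k−1)+g(S,k−1)`. -/
def gfAux (S : ℕ) : ℕ → ℤ × ℤ
  | 0 => (0, 0)
  | 1 => (1, 0)
  | (k+2) => (((S : ℤ) - 1) * (gfAux S (k+1)).2,
              ((S : ℤ) - 2) * (gfAux S (k+1)).2 + (gfAux S (k+1)).1)

def g (S k : ℕ) : ℤ := (gfAux S k).1
def f (S k : ℕ) : ℤ := (gfAux S k).2

/-- `φ_s(S,k)`: `g(S,k)` if `s = 1`, else `f(S,k)`. -/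
def phi (S s k : ℕ) : ℤ := if s = 1 then g S k else f S k

/-- `ψ_s(S,k) = ⌈(k(N−1)/N)·φ_s(S,k)⌉`. -/
def psi (S N s k : ℕ) : ℤ := ⌈((k : ℚ) * ((N : ℚ) - 1) / (N : ℚ)) * ((phi S s k : ℚ))⌉

/-- `q = Σ_{k=1}^{N} Σ_{s=1}^{S} C(N,k)·ψ_s(S,k)`. -/
def qTotal (S N : ℕ) : ℤ :=
  ∑ k ∈ Finset.Icc 1 N, ∑ s ∈ Finset.Icc 1 S, (N.choose k : ℤ) * psi S N s k

/-!
Since `N - R = N * M` and `M > 0`, the claim is `K * (N - R_t) < t * N ^ 2`. For the first branch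
of the minimum this is `N > 1`; for the second, `∑ S⁻ⁱ ≥ 1` reduces it to
`K * (N - (K - t) / (t + 1)) < t * N ^ 2`, whose left side is a concave quadratic in `K` with
maximum below `t * N ^ 2`.

Positivity of `M` means `q < N * S ^ (N - 1)`. The recurrence gives
`∑ₛ φ_s(S, k) = g + (S - 1) f = (S - 1) ^ (k - 1)`, and `ψ_s(S, k) ≤ k φ_s(S, k)`, so
`q ≤ ∑ₖ C(N, k) k (S - 1) ^ (k - 1) = N S ^ (N - 1)`; the inequality is strict because at `k = N`
the ceiling is exact and gives `(N - 1) φ_s(S, N)`.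
-/

open Finset

theorem sum_Icc_choose_mul_mul_pow {R : Type*} [CommSemiring R] (N : ℕ) (x : R) :
    ∑ k ∈ Icc 1 N, (N.choose k : R) * k * x ^ (k - 1) = N * (x + 1) ^ (N - 1) := by
  rcases N with _ | n
  · simp
  rw [← Ico_add_one_right_eq_Icc, sum_Ico_eq_sum_range, add_pow, mul_sum]
  refine sum_congr rfl fun j _ => ?_
  have h := congrArg (Nat.cast : ℕ → R) (Nat.add_one_mul_choose_eq n j)
  push_cast at h
  simp only [Nat.add_sub_cancel, one_pow, mul_one, add_comm 1 j]
  push_cast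
  rw [← h]
  ring

@[simp] lemma g_one (S : ℕ) : g S 1 = 1 := rfl
@[simp] lemma f_one (S : ℕ) : f S 1 = 0 := rfl

lemma g_add_two (S k : ℕ) : g S (k + 2) = ((S : ℤ) - 1) * f S (k + 1) := rfl

lemma f_add_two (S k : ℕ) : f S (k + 2) = ((S : ℤ) - 2) * f S (k + 1) + g S (k + 1) := rfl

lemma g_nonneg_and_f_nonneg {S : ℕ} (hS : 2 ≤ S) (k : ℕ) : 0 ≤ g S k ∧ 0 ≤ f S k := by
  have hS2 : (0 : ℤ) ≤ S - 2 := by omega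
  induction k using Nat.twoStepInduction with
  | zero => exact ⟨le_rfl, le_rfl⟩
  | one => simp
  | more k _ ih =>
    rw [g_add_two, f_add_two]
    exact ⟨by nlinarith [ih.2], by nlinarith [ih.1, ih.2]⟩

lemma phi_nonneg {S : ℕ} (hS : 2 ≤ S) (s k : ℕ) : 0 ≤ phi S s k := by
  unfold phi
  split_ifs
  exacts [(g_nonneg_and_f_nonneg hS k).1, (g_nonneg_and_f_nonneg hS k).2]

lemma g_add_mul_f (S k : ℕ) :
    g S (k + 1) + ((S : ℤ) - 1) * f S (k + 1) = ((S : ℤ) - 1) ^ k := by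
  induction k with
  | zero => simp
  | succ k ih =>
    rw [g_add_two, f_add_two, pow_succ, ← ih]
    ring

lemma sum_phi_succ {S : ℕ} (hS : 1 ≤ S) (k : ℕ) :
    ∑ s ∈ Icc 1 S, phi S s (k + 1) = ((S : ℤ) - 1) ^ k := by
  rw [← g_add_mul_f, ← insert_Icc_add_one_left_eq_Icc hS, sum_insert (by simp)]
  have hf : ∀ s ∈ Icc (1 + 1) S, phi S s (k + 1) = f S (k + 1) := fun s hs => by
    simp [phi, show s ≠ 1 by simp at hs; omega]
  rw [sum_congr rfl hf, sum_const, Nat.card_Icc, nsmul_eq_mul,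
    show S + 1 - (1 + 1) = S - 1 by omega, Nat.cast_sub hS]
  simp [phi]

lemma psi_le_mul_phi {S : ℕ} (hS : 2 ≤ S) (N s k : ℕ) : psi S N s k ≤ k * phi S s k := by
  have hcoef : (k : ℚ) * ((N : ℚ) - 1) / N ≤ k := by
    rw [mul_div_assoc]
    exact mul_le_of_le_one_right k.cast_nonneg (div_le_one_of_le₀ (by linarith) N.cast_nonneg)
  rw [psi, Int.ceil_le]
  push_cast
  exact mul_le_mul_of_nonneg_right hcoef (by exact_mod_cast phi_nonneg hS s k)

lemma psi_self {N : ℕ} (hN : N ≠ 0) (S s : ℕ) : psi S N s N = ((N : ℤ) - 1) * phi S s N := by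
  rw [psi, mul_div_cancel_left₀ _ (by exact_mod_cast hN : (N : ℚ) ≠ 0)]
  exact_mod_cast Int.ceil_intCast (((N : ℤ) - 1) * phi S s N)

lemma sum_psi_succ_le {S : ℕ} (hS : 2 ≤ S) (N k : ℕ) :
    ∑ s ∈ Icc 1 S, psi S N s (k + 1) ≤ (k + 1 : ℤ) * ((S : ℤ) - 1) ^ k := by
  calc ∑ s ∈ Icc 1 S, psi S N s (k + 1) ≤ ∑ s ∈ Icc 1 S, ((k + 1 : ℕ) : ℤ) * phi S s (k + 1) :=
        sum_le_sum fun s _ => psi_le_mul_phi hS N s (k + 1)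
    _ = (k + 1 : ℤ) * ((S : ℤ) - 1) ^ k := by
        rw [← mul_sum, sum_phi_succ (by omega)]
        push_cast
        rfl

lemma sum_psi_self_lt {S : ℕ} (hS : 2 ≤ S) (n : ℕ) :
    ∑ s ∈ Icc 1 S, psi S (n + 1) s (n + 1) < (n + 1 : ℤ) * ((S : ℤ) - 1) ^ n := by
  have hpos : 0 < ((S : ℤ) - 1) ^ n := pow_pos (by omega) n
  rw [sum_congr rfl fun s _ => psi_self n.succ_ne_zero S s, ← mul_sum, sum_phi_succ (by omega)]
  push_cast
  linarith

theorem qTotal_lt {S N : ℕ} (hS : 2 ≤ S) (hN : 1 ≤ N) :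
    qTotal S N < N * (S : ℤ) ^ (N - 1) := by
  obtain ⟨n, rfl⟩ : ∃ n, N = n + 1 := ⟨N - 1, by omega⟩
  have hterm : ∀ k ∈ Icc 1 (n + 1), ∑ s ∈ Icc 1 S, ((n + 1).choose k : ℤ) * psi S (n + 1) s k
      ≤ ((n + 1).choose k : ℤ) * k * ((S : ℤ) - 1) ^ (k - 1) := by
    intro k hk
    obtain ⟨j, rfl⟩ : ∃ j, k = j + 1 := ⟨k - 1, by simp at hk; omega⟩
    rw [← mul_sum, mul_assoc]
    push_cast
    exact mul_le_mul_of_nonneg_left (sum_psi_succ_le hS _ j) (by positivity)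
  calc qTotal S (n + 1)
      < ∑ k ∈ Icc 1 (n + 1), ((n + 1).choose k : ℤ) * k * ((S : ℤ) - 1) ^ (k - 1) := by
        refine sum_lt_sum hterm ⟨n + 1, by simp, ?_⟩
        simpa [← mul_sum] using sum_psi_self_lt hS n
    _ = (n + 1 : ℕ) * (S : ℤ) ^ (n + 1 - 1) := by
        rw [sum_Icc_choose_mul_mul_pow, sub_add_cancel]

section Rate

variable {𝕜 : Type*} [Field 𝕜] [LinearOrder 𝕜] [IsStrictOrderedRing 𝕜]

lemma one_le_sum_range_inv_pow {x : 𝕜} (hx : 0 ≤ x) {N : ℕ} (hN : N ≠ 0) :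
    1 ≤ ∑ i ∈ range N, (x ^ i)⁻¹ := by
  simpa using single_le_sum (fun i _ => by positivity : ∀ i ∈ range N, 0 ≤ (x ^ i)⁻¹)
    (mem_range.mpr (Nat.pos_of_ne_zero hN))

lemma mul_sub_div_add_one_lt {n t : 𝕜} (hn : 2 ≤ n) (ht : 1 ≤ t) (K : 𝕜) :
    K * (n - (K - t) / (t + 1)) < t * n ^ 2 := by
  have ht1 : 0 < t + 1 := by linarith
  rw [mul_sub, mul_div_assoc', sub_lt_iff_lt_add, ← sub_lt_iff_lt_add', lt_div_iff₀ ht1]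
  -- Four times the difference is `(2K - n(t+1) - t)² + 4tn²(t+1) - (n(t+1) + t)²`.
  nlinarith [sq_nonneg (2 * K - n * (t + 1) - t), mul_nonneg (sub_nonneg.2 hn) (sub_nonneg.2 ht)]

lemma mul_sub_min_lt {n t K σ : 𝕜} (hn : 2 ≤ n) (ht : 1 ≤ t) (htK : t ≤ K) (hσ : 1 ≤ σ) :
    K * (n - min (n * (1 - t / K)) ((K - t) / (t + 1) * σ)) < t * n ^ 2 := by
  have hK : 0 < K := by linarith
  rcases min_choice (n * (1 - t / K)) ((K - t) / (t + 1) * σ) with h | h <;> rw [h]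
  · rw [show K * (n - n * (1 - t / K)) = t * n by field_simp; ring]
    have : 0 < t * n * (n - 1) := mul_pos (mul_pos (by linarith) (by linarith)) (by linarith)
    linarith
  · have hquot : 0 ≤ (K - t) / (t + 1) := div_nonneg (by linarith) (by linarith)
    calc K * (n - (K - t) / (t + 1) * σ) ≤ K * (n - (K - t) / (t + 1)) := by
          gcongr
          exact le_mul_of_one_le_right hquot hσ
      _ < t * n ^ 2 := mul_sub_div_add_one_lt hn ht K

end Rate

theorem lemma4_2_N_lt_K_general (S N K : ℕ) (hS : 2 ≤ S) (hN : 2 ≤ N)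
    (t : ℕ) (ht : t ∈ Finset.Icc 1 K) :
    let q : ℚ := (qTotal S N : ℚ)
    let M : ℚ := ((N : ℚ) * (S : ℚ) ^ (N - 1) - q) / ((K : ℚ) * (S : ℚ) ^ (N - 1))
    let R : ℚ := ((N : ℚ) / (K : ℚ)) * (q / (S : ℚ) ^ (N - 1) + (K : ℚ) - (N : ℚ))
    let Rt : ℚ := min ((N : ℚ) * (1 - (t : ℚ) / (K : ℚ)))
      ((((K : ℚ) - (t : ℚ)) / ((t : ℚ) + 1)) * ∑ i ∈ Finset.range N, ((S : ℚ) ^ i)⁻¹)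
    (N : ℚ) - ((K : ℚ) / ((t : ℚ) * (N : ℚ))) * ((N : ℚ) - Rt) * M > R := by
  intro q M R Rt
  obtain ⟨ht1, htK⟩ := mem_Icc.mp ht
  have hq : q < N * (S : ℚ) ^ (N - 1) := by
    simp only [q]
    exact_mod_cast qTotal_lt hS (by omega)
  have hSpow : (0 : ℚ) < (S : ℚ) ^ (N - 1) := by positivity
  have hK : (0 : ℚ) < K := by exact_mod_cast (by omega : 0 < K)
  have hM : 0 < M := div_pos (by linarith) (by positivity)
  have hR : R = N - N * M := by
    simp only [R, M]
    field_simp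
    ring
  have hRt : K * (N - Rt) < t * (N : ℚ) ^ 2 :=
    mul_sub_min_lt (by exact_mod_cast hN) (by exact_mod_cast ht1) (by exact_mod_cast htK)
      (one_le_sum_range_inv_pow (by positivity) (by omega))
  have hslope : (K : ℚ) / (t * N) * (N - Rt) < N := by
    rw [div_mul_eq_mul_div, div_lt_iff₀ (by positivity)]
    linarith
  rw [hR, gt_iff_lt, sub_lt_sub_iff_left]
  exact mul_lt_mul_of_pos_right hslope hM

theorem lemma4_2_N_lt_K (S N K : ℕ) (hS : 2 ≤ S) (hN : 2 ≤ N) (hNK : N < K)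
    (t : ℕ) (ht : t ∈ Finset.Icc 1 K) :
    let q : ℚ := (qTotal S N : ℚ)
    let M : ℚ := ((N : ℚ) * (S : ℚ) ^ (N - 1) - q) / ((K : ℚ) * (S : ℚ) ^ (N - 1))
    let R : ℚ := ((N : ℚ) / (K : ℚ)) * (q / (S : ℚ) ^ (N - 1) + (K : ℚ) - (N : ℚ))
    let Rt : ℚ := min ((N : ℚ) * (1 - (t : ℚ) / (K : ℚ)))
      ((((K : ℚ) - (t : ℚ)) / ((t : ℚ) + 1)) * ∑ i ∈ Finset.range N, ((S : ℚ) ^ i)⁻¹)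
    (N : ℚ) - ((K : ℚ) / ((t : ℚ) * (N : ℚ))) * ((N : ℚ) - Rt) * M > R :=
  lemma4_2_N_lt_K_general S N K hS hN t ht
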